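/- Let p ∈ C[0,∞) ∩ C¹(0,∞) with p(0)=0, p'(ρ)>0 for ρ>0, and lim_{ρ→∞} p'(ρ)/ρ^{γ−1} = p_∞ > 0 for some γ > 3/2. Then for each r > 0 there exists c(r) > 0 such that H(ρ) − H'(r)(ρ−r) − H(r) ≥ c(r)(1 + ρ^γ) for all ρ outside the interval (r/2, 2r) (i.e. for 0 ≤ ρ ≤ r/2 and ρ ≥ 2r). -/

import Mathlib

open Set Filter Topology

/-!
`H` is convex on `(0, ∞)` with `H'' = p'/ρ > 0`, so the tangent gap
`E(ρ) = H(ρ) - H'(r)(ρ - r) - H(r)` decreases on `(0, r]`, increases on `[r, ∞)` and vanishes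
only at `r`; at `ρ = 0` it equals `p(r) > 0`. This bounds `E` below by a positive constant on
`[0, r/2]` and on `[2r, ∞)`, which suffices for bounded `ρ`. For large `ρ`, `p'(ρ) ≳ ρ^(γ-1)` gives
`H''(ρ) ≳ ρ^(γ-2)`, and integrating twice (possible since `γ - 2 > -1`) gives `E(ρ) ≳ ρ^γ`.
-/

theorem hasDerivAt_integral_of_continuousOn {E : Type*} [NormedAddCommGroup E] [NormedSpace ℝ E]
    [CompleteSpace E] {f : ℝ → E} {s : Set ℝ} {a x : ℝ} (hs : IsOpen s) (hs' : s.OrdConnected)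
    (hf : ContinuousOn f s) (ha : a ∈ s) (hx : x ∈ s) :
    HasDerivAt (fun t => ∫ z in a..t, f z) (f x) x :=
  intervalIntegral.integral_hasDerivAt_right ((hf.mono (hs'.uIcc_subset ha hx)).intervalIntegrable)
    (hf.stronglyMeasurableAtFilter hs x hx) (hf.continuousAt (hs.mem_nhds hx))

theorem exists_eventually_mul_rpow_le_of_deriv {f f' : ℝ → ℝ} {k β : ℝ} (hk : 0 < k)
    (hβ : -1 < β) (hf : ∀ᶠ x in atTop, HasDerivAt f (f' x) x)
    (hf' : ∀ᶠ x in atTop, k * x ^ β ≤ f' x) :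
    ∃ k' > 0, ∀ᶠ x in atTop, k' * x ^ (β + 1) ≤ f x := by
  obtain ⟨M, hM⟩ := eventually_atTop.1 ((hf.and hf').and (eventually_gt_atTop 0))
  set K := k / (β + 1)
  have hK : 0 < K := div_pos hk (by linarith)
  have hpow : ∀ x, M ≤ x → HasDerivAt (fun x => K * x ^ (β + 1)) (k * x ^ β) x := by
    intro x hx
    refine ((Real.hasDerivAt_rpow_const (Or.inl (hM x hx).2.ne')).const_mul K).congr_deriv ?_
    rw [add_sub_cancel_right, ← mul_assoc, div_mul_cancel₀ k (by linarith : β + 1 ≠ 0)]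
  have hmono : MonotoneOn (fun x => f x - K * x ^ (β + 1)) (Ici M) := by
    refine monotoneOn_of_hasDerivWithinAt_nonneg (convex_Ici M)
      (f' := fun x => f' x - k * x ^ β)
      (fun x hx => ((hM x hx).1.1.sub (hpow x hx)).continuousAt.continuousWithinAt)
      (fun x hx => ?_) (fun x hx => ?_) <;> rw [interior_Ici] at hx
    · exact ((hM x hx.le).1.1.sub (hpow x hx.le)).hasDerivWithinAt
    · exact sub_nonneg.2 (hM x hx.le).1.2
  refine ⟨K / 2, half_pos hK, ?_⟩
  filter_upwards [(tendsto_rpow_atTop (by linarith : 0 < β + 1)).eventually_ge_atTop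
    ((K * M ^ (β + 1) - f M) / (K / 2)), eventually_ge_atTop M] with x hx hxM
  have hgap := hmono self_mem_Ici hxM hxM
  rw [div_le_iff₀ (half_pos hK)] at hx
  simp only at hgap
  linarith

theorem HasDerivAt.sub_tangent {H : ℝ → ℝ} {h s r c x : ℝ} (hH : HasDerivAt H h x) :
    HasDerivAt (fun ρ => H ρ - s * (ρ - r) - c) (h - s) x := by
  simpa using (hH.sub (((hasDerivAt_id x).sub_const r).const_mul s)).sub_const c

section TangentGap

variable {H H' : ℝ → ℝ} {a r : ℝ}

theorem strictAntiOn_sub_tangent (hH : ∀ x, a < x → HasDerivAt H (H' x) x)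
    (hH' : StrictMonoOn H' (Ioi a)) (hr : a < r) :
    StrictAntiOn (fun ρ => H ρ - H' r * (ρ - r) - H r) (Ioc a r) := by
  refine strictAntiOn_of_hasDerivWithinAt_neg (convex_Ioc a r) (f' := fun x => H' x - H' r)
    (fun x hx => (hH x hx.1).sub_tangent.continuousAt.continuousWithinAt)
    (fun x hx => ?_) (fun x hx => ?_) <;> rw [interior_Ioc] at hx
  · exact (hH x hx.1).sub_tangent.hasDerivWithinAt
  · exact sub_neg.2 (hH' hx.1 hr hx.2)

theorem strictMonoOn_sub_tangent (hH : ∀ x, a < x → HasDerivAt H (H' x) x)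
    (hH' : StrictMonoOn H' (Ioi a)) (hr : a < r) :
    StrictMonoOn (fun ρ => H ρ - H' r * (ρ - r) - H r) (Ici r) := by
  refine strictMonoOn_of_hasDerivWithinAt_pos (convex_Ici r) (f' := fun x => H' x - H' r)
    (fun x hx => (hH x (hr.trans_le hx)).sub_tangent.continuousAt.continuousWithinAt)
    (fun x hx => ?_) (fun x hx => ?_) <;> rw [interior_Ici] at hx
  · exact (hH x (hr.trans hx)).sub_tangent.hasDerivWithinAt
  · exact sub_pos.2 (hH' hr (hr.trans hx) hx)

theorem sub_tangent_pos (hH : ∀ x, a < x → HasDerivAt H (H' x) x)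
    (hH' : StrictMonoOn H' (Ioi a)) (hr : a < r) {ρ : ℝ} (hρ : a < ρ) (hρr : ρ ≠ r) :
    0 < H ρ - H' r * (ρ - r) - H r := by
  have hrr : H r - H' r * (r - r) - H r = 0 := by ring
  rcases hρr.lt_or_gt with hlt | hgt
  · simpa [hrr] using strictAntiOn_sub_tangent hH hH' hr ⟨hρ, hlt.le⟩ ⟨hr, le_rfl⟩ hlt
  · simpa [hrr] using strictMonoOn_sub_tangent hH hH' hr self_mem_Ici hgt.le hgt

theorem eventually_mul_rpow_le_sub_tangent {h : ℝ → ℝ} {k γ : ℝ} (hk : 0 < k) (hγ : 1 < γ)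
    (hH : ∀ᶠ x in atTop, HasDerivAt H (H' x) x) (hH' : ∀ᶠ x in atTop, HasDerivAt H' (h x) x)
    (hh : ∀ᶠ x in atTop, k * x ^ (γ - 2) ≤ h x) :
    ∃ k' > 0, ∀ᶠ x in atTop, k' * x ^ γ ≤ H x - H' r * (x - r) - H r := by
  obtain ⟨k₁, hk₁, h₁⟩ := exists_eventually_mul_rpow_le_of_deriv hk (by linarith)
    (hH'.mono fun x hx => hx.sub_const (H' r)) hh
  obtain ⟨k₂, hk₂, h₂⟩ := exists_eventually_mul_rpow_le_of_deriv hk₁ (by linarith)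
    (hH.mono fun x hx => hx.sub_tangent (r := r) (c := H r)) h₁
  rw [show γ - 2 + 1 + 1 = γ by ring] at h₂
  exact ⟨k₂, hk₂, h₂⟩

end TangentGap

theorem exists_mul_one_add_rpow_le_of_antitoneOn {f : ℝ → ℝ} {b γ : ℝ} (hb : 0 < b) (hγ : 0 < γ)
    (hf : AntitoneOn f (Ioc 0 b)) (hf0 : 0 < f 0) (hfb : 0 < f b) :
    ∃ c > 0, ∀ x, 0 ≤ x → x ≤ b → c * (1 + x ^ γ) ≤ f x := by
  have hb' : 0 < 1 + b ^ γ := by positivity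
  refine ⟨min (f 0 / 2) (f b / (1 + b ^ γ)), lt_min (half_pos hf0) (div_pos hfb hb'),
    fun x hx hxb => ?_⟩
  rcases hx.eq_or_lt with rfl | hx
  · rw [Real.zero_rpow hγ.ne']
    linarith [min_le_left (f 0 / 2) (f b / (1 + b ^ γ))]
  calc min (f 0 / 2) (f b / (1 + b ^ γ)) * (1 + x ^ γ)
      ≤ f b / (1 + b ^ γ) * (1 + b ^ γ) := by
        gcongr
        · exact min_le_right _ _
    _ = f b := div_mul_cancel₀ _ hb'.ne'
    _ ≤ f x := hf ⟨hx, hxb⟩ ⟨hb, le_rfl⟩ hxb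

theorem exists_mul_one_add_rpow_le_of_monotoneOn {f : ℝ → ℝ} {a k γ : ℝ} (ha : 0 ≤ a)
    (hγ : 0 ≤ γ) (hk : 0 < k) (hf : MonotoneOn f (Ici a)) (hfa : 0 < f a)
    (hgrowth : ∀ᶠ x in atTop, k * x ^ γ ≤ f x) :
    ∃ c > 0, ∀ x, a ≤ x → c * (1 + x ^ γ) ≤ f x := by
  obtain ⟨M, hM⟩ := eventually_atTop.1 (hgrowth.and (eventually_ge_atTop (max a 1)))
  have hM0 : 0 ≤ M := ha.trans ((le_max_left _ _).trans (hM M le_rfl).2)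
  have hM' : 0 < 1 + M ^ γ := by positivity
  refine ⟨min (f a / (1 + M ^ γ)) (k / 2), lt_min (div_pos hfa hM') (half_pos hk),
    fun x hx => ?_⟩
  have hx0 : 0 ≤ x := ha.trans hx
  rcases le_total x M with hxM | hMx
  · calc min (f a / (1 + M ^ γ)) (k / 2) * (1 + x ^ γ)
        ≤ f a / (1 + M ^ γ) * (1 + M ^ γ) := by
          gcongr
          · exact min_le_left _ _
    _ = f a := div_mul_cancel₀ _ hM'.ne'
    _ ≤ f x := hf self_mem_Ici hx hx
  · have h1 : 1 ≤ x ^ γ :=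
      Real.one_le_rpow ((le_max_right _ _).trans ((hM M le_rfl).2.trans hMx)) hγ
    calc min (f a / (1 + M ^ γ)) (k / 2) * (1 + x ^ γ) ≤ k / 2 * (x ^ γ + x ^ γ) := by
          gcongr
          · exact min_le_right _ _
    _ = k * x ^ γ := by ring
    _ ≤ f x := (hM x hMx).1

noncomputable def pressurePotential (p : ℝ → ℝ) (ρ : ℝ) : ℝ :=
  ρ * ∫ z in (1:ℝ)..ρ, p z / z ^ 2

noncomputable def pressurePotentialDeriv (p : ℝ → ℝ) (ρ : ℝ) : ℝ :=
  (∫ z in (1:ℝ)..ρ, p z / z ^ 2) + p ρ / ρ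

section PressurePotential

variable {p : ℝ → ℝ} {x : ℝ}

theorem hasDerivAt_integral_div_sq (hp : ContinuousOn p (Ioi 0)) (hx : 0 < x) :
    HasDerivAt (fun ρ => ∫ z in (1:ℝ)..ρ, p z / z ^ 2) (p x / x ^ 2) x :=
  hasDerivAt_integral_of_continuousOn isOpen_Ioi ordConnected_Ioi
    (hp.div (continuousOn_pow 2) fun _ hz => pow_ne_zero 2 (ne_of_gt hz)) (mem_Ioi.2 one_pos) hx

theorem hasDerivAt_pressurePotential (hp : ContinuousOn p (Ioi 0)) (hx : 0 < x) :
    HasDerivAt (pressurePotential p) (pressurePotentialDeriv p x) x := by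
  refine ((hasDerivAt_id x).mul (hasDerivAt_integral_div_sq hp hx)).congr_deriv ?_
  rw [pressurePotentialDeriv, id, one_mul]
  field_simp

theorem hasDerivAt_pressurePotentialDeriv (hp : ContinuousOn p (Ioi 0)) {p' : ℝ}
    (hpx : HasDerivAt p p' x) (hx : 0 < x) :
    HasDerivAt (pressurePotentialDeriv p) (p' / x) x := by
  refine ((hasDerivAt_integral_div_sq hp hx).add
    (hpx.div (hasDerivAt_id x) hx.ne')).congr_deriv ?_
  rw [id]
  field_simp
  ring

theorem strictMonoOn_pressurePotentialDeriv (hp : DifferentiableOn ℝ p (Ioi 0))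
    (hp' : ∀ x, 0 < x → 0 < deriv p x) : StrictMonoOn (pressurePotentialDeriv p) (Ioi 0) := by
  have hG : ∀ x, 0 < x → HasDerivAt (pressurePotentialDeriv p) (deriv p x / x) x := fun x hx =>
    hasDerivAt_pressurePotentialDeriv hp.continuousOn
      (hp.differentiableAt (Ioi_mem_nhds hx)).hasDerivAt hx
  refine strictMonoOn_of_hasDerivWithinAt_pos (convex_Ioi 0) (f' := fun x => deriv p x / x)
    (fun x hx => (hG x hx).continuousAt.continuousWithinAt)
    (fun x hx => ?_) (fun x hx => ?_) <;> rw [interior_Ioi] at hx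
  · exact (hG x hx).hasDerivWithinAt
  · exact div_pos (hp' x hx) hx

theorem mul_pressurePotentialDeriv_sub_pressurePotential (hx : x ≠ 0) :
    x * pressurePotentialDeriv p x - pressurePotential p x = p x := by
  rw [pressurePotentialDeriv, pressurePotential]
  field_simp
  ring

end PressurePotential

theorem eventually_mul_rpow_le_div_self_of_tendsto {g : ℝ → ℝ} {L γ : ℝ} (hL : 0 < L)
    (hg : Tendsto (fun x => g x / x ^ (γ - 1)) atTop (𝓝 L)) :
    ∀ᶠ x in atTop, L / 2 * x ^ (γ - 2) ≤ g x / x := by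
  filter_upwards [hg.eventually (eventually_gt_nhds (half_lt_self hL)), eventually_gt_atTop 0]
    with x hx hx0
  rw [lt_div_iff₀ (Real.rpow_pos_of_pos hx0 _)] at hx
  rw [le_div_iff₀ hx0, mul_assoc, ← Real.rpow_add_one hx0.ne', show γ - 2 + 1 = γ - 1 by ring]
  exact hx.le

/-- Growth lower bound for the relative energy integrand far from `r`:
under the isentropic growth assumption `p'(ρ)/ρ^{γ−1} → p_∞ > 0` with `γ > 3/2`,
for each `r > 0` there is `c(r) > 0` with
`H(ρ) − H'(r)(ρ−r) − H(r) ≥ c(r)(1 + ρ^γ)` for `ρ ≤ r/2` or `ρ ≥ 2r`. -/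
theorem stmt4 (p H : ℝ → ℝ) (γ pinf : ℝ)
    (hpc : ContinuousOn p (Set.Ici (0:ℝ)))
    (hp1 : ContDiffOn ℝ 1 p (Set.Ioi (0:ℝ)))
    (hp0 : p 0 = 0)
    (hp' : ∀ ρ : ℝ, 0 < ρ → 0 < deriv p ρ)
    (hγ : 3 / 2 < γ) (hpinf : 0 < pinf)
    (hlim : Filter.Tendsto (fun ρ : ℝ => deriv p ρ / ρ ^ (γ - 1)) Filter.atTop (nhds pinf))
    (hH : ∀ ρ : ℝ, 0 < ρ → H ρ = ρ * ∫ z in (1:ℝ)..ρ, p z / z ^ 2)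
    (hH0 : H 0 = 0) :
    ∀ r : ℝ, 0 < r → ∃ c : ℝ, 0 < c ∧ ∀ ρ : ℝ, 0 ≤ ρ → (ρ ≤ r / 2 ∨ 2 * r ≤ ρ) →
      c * (1 + ρ ^ γ) ≤ H ρ - deriv H r * (ρ - r) - H r := by
  intro r hr
  have hpd : DifferentiableOn ℝ p (Ioi 0) := hp1.differentiableOn one_ne_zero
  have hHd : ∀ x, 0 < x → HasDerivAt H (pressurePotentialDeriv p x) x := fun x hx =>
    (hasDerivAt_pressurePotential hpd.continuousOn hx).congr_of_eventuallyEq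
      (eventually_of_mem (Ioi_mem_nhds hx) hH)
  have hG := strictMonoOn_pressurePotentialDeriv hpd hp'
  rw [(hHd r hr).deriv]
  have hE0 : 0 < H 0 - pressurePotentialDeriv p r * (0 - r) - H r := by
    have hpr : p 0 < p r := strictMonoOn_of_deriv_pos (convex_Ici 0) hpc
      (by simpa using hp') self_mem_Ici hr.le hr
    have hE0p := mul_pressurePotentialDeriv_sub_pressurePotential (p := p) hr.ne'
    rw [pressurePotential, ← hH r hr] at hE0p
    rw [hH0]
    linarith
  obtain ⟨c₁, hc₁, h₁⟩ := exists_mul_one_add_rpow_le_of_antitoneOn (γ := γ) (half_pos hr)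
    (by linarith) ((strictAntiOn_sub_tangent hHd hG hr).antitoneOn.mono
      (Ioc_subset_Ioc_right (half_le_self hr.le)))
    hE0 (sub_tangent_pos hHd hG hr (half_pos hr) (by linarith))
  obtain ⟨k, hk, hgrowth⟩ := eventually_mul_rpow_le_sub_tangent (r := r) (half_pos hpinf)
    (by linarith) ((eventually_gt_atTop 0).mono hHd)
    ((eventually_gt_atTop 0).mono fun x hx => hasDerivAt_pressurePotentialDeriv hpd.continuousOn
      (hpd.differentiableAt (Ioi_mem_nhds hx)).hasDerivAt hx)
    (eventually_mul_rpow_le_div_self_of_tendsto hpinf hlim)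
  obtain ⟨c₂, hc₂, h₂⟩ := exists_mul_one_add_rpow_le_of_monotoneOn (a := 2 * r) (by positivity)
    (by linarith) hk
    ((strictMonoOn_sub_tangent hHd hG hr).monotoneOn.mono (Ici_subset_Ici.2 (by linarith)))
    (sub_tangent_pos hHd hG hr (by linarith) (by linarith)) hgrowth
  refine ⟨min c₁ c₂, lt_min hc₁ hc₂, fun ρ hρ hρr => ?_⟩
  have hρ' : 0 ≤ 1 + ρ ^ γ := by positivity
  rcases hρr with h | h
  · exact (mul_le_mul_of_nonneg_right (min_le_left _ _) hρ').trans (h₁ ρ hρ h)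
  · exact (mul_le_mul_of_nonneg_right (min_le_right _ _) hρ').trans (h₂ ρ h)
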